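/- For the standard random walk on {1,…,n} with reflecting barriers (π_i = 1/2 for all interior states), E[T_{1,n}] + E[T_{n,1}] = 2(n−1)²; hence the lower bound 2(n−1)² on E[T_{1,n}] + E[T_{n,1}] over all nearest-neighbour chains with reflecting barriers is attained by the standard random walk. -/

import Mathlib

open MeasureTheory ENNReal Finset

noncomputable section

/-- `μ` is the law of the time-homogeneous Markov chain on the state space `S` with
one-step transition probabilities `p` and initial state `s`, described through the
probabilities of all cylinder events. -/
def IsMarkovChain {S : Type*} [MeasurableSpace S] [DecidableEq S] (p : S → S → ℝ≥0∞) (s : S)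
    (μ : MeasureTheory.Measure (ℕ → S)) : Prop :=
  MeasureTheory.IsProbabilityMeasure μ ∧
    ∀ (T : ℕ) (path : ℕ → S),
      μ {ω | ∀ t ≤ T, ω t = path t} =
        (if path 0 = s then 1 else 0) * ∏ t ∈ Finset.range T, p (path t) (path (t + 1))

/-- The first *positive* hitting time `min {t > 0 : ω t = j}` of the state `j`
along the trajectory `ω`, viewed in `ℝ≥0∞` (it is `∞` if `j` is never hit). -/
def hitTime {S : Type*} (j : S) (ω : ℕ → S) : ℝ≥0∞ :=
  sInf ((fun t : ℕ => (t : ℝ≥0∞)) '' {t | 0 < t ∧ ω t = j})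

/-- The expected hitting time `E[T_{·,j}]` of state `j` under the trajectory law `μ`
(possibly `+∞`). -/
def expHit {S : Type*} [MeasurableSpace S] (μ : MeasureTheory.Measure (ℕ → S)) (j : S) :
    ℝ≥0∞ :=
  ∫⁻ ω, hitTime j ω ∂μ

/-- Transition probabilities of the nearest-neighbour Markov chain on `{a, …, b} ⊆ ℤ`
with reflecting barriers at `a` and `b`: from `a` go to `a+1`, from `b` go to `b-1`,
and from an interior state `i` go to `i+1` with probability `π i` and to `i-1` with
probability `1 - π i`. -/
def nnTrans (a b : ℤ) (π : ℤ → ℝ≥0∞) : ℤ → ℤ → ℝ≥0∞ := fun i j =>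
  if i = a then (if j = a + 1 then 1 else 0)
  else if i = b then (if j = b - 1 then 1 else 0)
  else if a < i ∧ i < b then
    (if j = i + 1 then π i else if j = i - 1 then 1 - π i else 0)
  else 0

/-!
The expected hitting time of `j` is `∑_K P(T > K)`, and `P(T > K)` is the total mass at time `K`
of the chain killed on hitting `j`. If `h` is bounded, vanishes at `j` and satisfies
`h = 1 + P h` elsewhere on a closed set containing the start `s`, then
`Φ K = ∑_i (killed mass at i) · h i` satisfies `Φ K = P(T > K) + Φ (K + 1)`. As `h` is bounded,
`Φ K → 0` whenever `∑_K P(T > K)` is finite, so `E[T] = Φ 0 = h s`.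

For the standard walk started at an end `a` of `{1, …, n}`, `h i = (n - 1)² - (i - a)²` is such a
function: `(i - a)²` has second difference `2`, and next to the reflecting end `h` drops by `1`.
Hence both crossing times have expectation `(n - 1)²`.
-/

open Filter Topology

section PathSpace

variable {S : Type*}

def cyl (K : ℕ) (v : ℕ → S) : Set (ℕ → S) := {ω | ∀ t ≤ K, ω t = v t}

def stopPath (K : ℕ) (ω : ℕ → S) : ℕ → S := fun t => ω (min t K)

def DependsUpTo (K : ℕ) (E : Set (ℕ → S)) : Prop :=
  ∀ ω ω', (∀ t ≤ K, ω t = ω' t) → ω ∈ E → ω' ∈ E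

lemma cyl_congr {K : ℕ} {v w : ℕ → S} (h : ∀ t ≤ K, v t = w t) : cyl K v = cyl K w := by
  ext ω
  exact forall₂_congr fun t ht => by rw [h t ht]

lemma cyl_succ (K : ℕ) (v : ℕ → S) :
    cyl (K + 1) v = cyl K v ∩ {ω | ω (K + 1) = v (K + 1)} := by
  ext ω
  simp only [cyl, Set.mem_inter_iff, Set.mem_ofPred_eq, Nat.le_succ_iff_eq_or_le]
  grind

lemma mem_cyl_stopPath {K : ℕ} (ω : ℕ → S) : ω ∈ cyl K (stopPath K ω) := fun t ht => by
  simp [stopPath, min_eq_left ht]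

lemma stopPath_eq_of_mem_cyl {K : ℕ} {ω u : ℕ → S} (h : ω ∈ cyl K (stopPath K u)) :
    stopPath K ω = stopPath K u := by
  funext t
  simpa [stopPath] using h _ (min_le_right t K)

lemma pairwiseDisjoint_cyl {K : ℕ} {V : Set (ℕ → S)} (hV : V ⊆ Set.range (stopPath K)) :
    V.PairwiseDisjoint (cyl K) := by
  intro v hv v' hv' hne
  obtain ⟨u, rfl⟩ := hV hv
  obtain ⟨u', rfl⟩ := hV hv'
  exact Set.disjoint_left.2 fun ω hω hω' =>
    hne ((stopPath_eq_of_mem_cyl hω).symm.trans (stopPath_eq_of_mem_cyl hω'))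

lemma countable_range_stopPath [Countable S] (K : ℕ) :
    (Set.range (stopPath (S := S) K)).Countable := by
  refine (Set.countable_range fun g : Fin (K + 1) → S => fun t => g ⟨min t K, by omega⟩).mono ?_
  rintro _ ⟨ω, rfl⟩
  exact ⟨fun t => ω t, rfl⟩

lemma DependsUpTo.inter {K : ℕ} {E F : Set (ℕ → S)} (hE : DependsUpTo K E)
    (hF : DependsUpTo K F) : DependsUpTo K (E ∩ F) :=
  fun ω ω' h hω => ⟨hE ω ω' h hω.1, hF ω ω' h hω.2⟩

lemma dependsUpTo_eval {K t : ℕ} (ht : t ≤ K) (i : S) : DependsUpTo K {ω | ω t = i} :=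
  fun _ _ h hω => (h t ht).symm.trans hω

lemma DependsUpTo.eq_biUnion_cyl {K : ℕ} {E : Set (ℕ → S)} (hE : DependsUpTo K E) :
    E = ⋃ v ∈ stopPath K '' E, cyl K v := by
  ext ω
  simp only [Set.mem_iUnion, Set.mem_image, exists_prop]
  constructor
  · exact fun hω => ⟨_, ⟨ω, hω, rfl⟩, mem_cyl_stopPath ω⟩
  · rintro ⟨_, ⟨u, hu, rfl⟩, hω⟩
    exact hE u ω (fun t ht => by simpa [stopPath, min_eq_left ht] using (hω t ht).symm) hu

variable [MeasurableSpace S] [DiscreteMeasurableSpace S]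

lemma measurableSet_cyl (K : ℕ) (v : ℕ → S) : MeasurableSet (cyl K v) := by
  have : cyl K v = ⋂ t ∈ Set.Iic K, (fun ω : ℕ → S => ω t) ⁻¹' {v t} := by
    ext ω
    simp [cyl]
  rw [this]
  exact .biInter (Set.to_countable _) fun t _ => measurable_pi_apply t .of_discrete

variable [Countable S]

lemma DependsUpTo.measurableSet {K : ℕ} {E : Set (ℕ → S)} (hE : DependsUpTo K E) :
    MeasurableSet E := by
  rw [hE.eq_biUnion_cyl]
  exact .biUnion ((countable_range_stopPath K).mono (Set.image_subset_range _ _))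
    fun v _ => measurableSet_cyl K v

lemma DependsUpTo.measure_eq_tsum (μ : Measure (ℕ → S)) {K : ℕ} {E : Set (ℕ → S)}
    (hE : DependsUpTo K E) : μ E = ∑' v : stopPath K '' E, μ (cyl K v) := by
  conv_lhs => rw [hE.eq_biUnion_cyl]
  have hV := Set.image_subset_range (stopPath K) E
  exact measure_biUnion ((countable_range_stopPath K).mono hV) (pairwiseDisjoint_cyl hV)
    fun v _ => measurableSet_cyl K v

lemma measure_eq_tsum_inter_eval (μ : Measure (ℕ → S)) {E : Set (ℕ → S)} (hE : MeasurableSet E)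
    (K : ℕ) : μ E = ∑' i, μ (E ∩ {ω | ω K = i}) := by
  rw [← measure_iUnion (fun i i' hi => Set.disjoint_left.2 fun _ h h' => hi (h.2.symm.trans h'.2))
    fun i => hE.inter (by measurability), ← Set.inter_iUnion,
    Set.iUnion_eq_univ_iff.2 fun ω => ⟨ω K, rfl⟩, Set.inter_univ]

end PathSpace

lemma sInf_natCast_image_eq_tsum (A : Set ℕ) :
    sInf ((fun t : ℕ => (t : ℝ≥0∞)) '' A) = ∑' K : ℕ, {K | ∀ t ∈ A, K < t}.indicator 1 K := by
  rcases A.eq_empty_or_nonempty with rfl | hA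
  · simp
  have hlt : {K | ∀ t ∈ A, K < t} = Set.Iio (sInf A) :=
    Set.ext fun K => ⟨fun h => h _ (Nat.sInf_mem hA), fun h t ht => h.trans_le (Nat.sInf_le ht)⟩
  have hinf : sInf ((fun t : ℕ => (t : ℝ≥0∞)) '' A) = (sInf A : ℕ) :=
    le_antisymm (sInf_le ⟨_, Nat.sInf_mem hA, rfl⟩)
      (le_sInf fun _ ⟨t, ht, h⟩ => h ▸ Nat.cast_le.2 (Nat.sInf_le ht))
  rw [hinf, hlt, tsum_eq_sum (s := range (sInf A)) fun K hK => by simpa using hK,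
    Finset.sum_congr rfl fun K hK => Set.indicator_of_mem (by simpa using hK) 1]
  simp

section Avoids

variable {S : Type*}

def avoids (j : S) (K : ℕ) : Set (ℕ → S) := {ω | ∀ t, 0 < t → ω t = j → K < t}

variable {j : S}

lemma avoids_zero : avoids j 0 = Set.univ := Set.eq_univ_of_forall fun _ _ ht _ => ht

lemma avoids_succ_inter_self (K : ℕ) : avoids j (K + 1) ∩ {ω | ω (K + 1) = j} = ∅ :=
  Set.eq_empty_of_forall_notMem fun _ ⟨h, hj⟩ => lt_irrefl _ (h _ K.succ_pos hj)

lemma avoids_succ_inter {i : S} (hij : i ≠ j) (K : ℕ) :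
    avoids j (K + 1) ∩ {ω | ω (K + 1) = i} = avoids j K ∩ {ω | ω (K + 1) = i} := by
  ext ω
  refine and_congr_left fun hi => forall₃_congr fun t ht hj => ⟨fun h => by omega, fun h => ?_⟩
  rcases eq_or_ne t (K + 1) with rfl | htK
  · exact absurd (hi.symm.trans hj) hij
  · omega

lemma dependsUpTo_avoids (K : ℕ) : DependsUpTo K (avoids j K) := by
  intro ω ω' h hj t ht ht'
  by_contra! htK
  exact (hj t ht ((h t htK).trans ht')).not_ge htK

lemma hitTime_eq_tsum_indicator (ω : ℕ → S) :
    hitTime j ω = ∑' K, (avoids j K).indicator 1 ω := by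
  rw [hitTime, sInf_natCast_image_eq_tsum]
  refine tsum_congr fun K => ?_
  simp only [Set.mem_ofPred_eq, and_imp]
  rfl

end Avoids

def killedDist {S : Type*} [DecidableEq S] (p : S → S → ℝ≥0∞) (s j : S) : ℕ → S → ℝ≥0∞
  | 0 => fun i => if i = s then 1 else 0
  | K + 1 => fun i => if i = j then 0 else ∑' m, killedDist p s j K m * p m i

namespace IsMarkovChain

variable {S : Type*} [MeasurableSpace S] [DecidableEq S] {p : S → S → ℝ≥0∞} {s : S}
  {μ : Measure (ℕ → S)}

lemma measure_cyl_succ (hμ : IsMarkovChain p s μ) (K : ℕ) (v : ℕ → S) :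
    μ (cyl (K + 1) v) = μ (cyl K v) * p (v K) (v (K + 1)) := by
  rw [cyl, cyl, hμ.2, hμ.2, Finset.prod_range_succ, mul_assoc]

lemma measure_cyl_inter (hμ : IsMarkovChain p s μ) (K : ℕ) (v : ℕ → S) (i : S) :
    μ (cyl K v ∩ {ω | ω (K + 1) = i}) = μ (cyl K v) * p (v K) i := by
  set w := Function.update v (K + 1) i
  have hvw : ∀ t ≤ K, v t = w t := fun t ht => (Function.update_of_ne (by omega) _ _).symm
  have hwi : w (K + 1) = i := Function.update_self _ _ _
  rw [cyl_congr hvw, hvw K le_rfl, ← hwi, ← cyl_succ, hμ.measure_cyl_succ]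

variable [DiscreteMeasurableSpace S] [Countable S]

lemma measure_inter_eq_mul (hμ : IsMarkovChain p s μ) {K : ℕ} {E : Set (ℕ → S)}
    (hE : DependsUpTo K E) {m : S} (hm : ∀ ω ∈ E, ω K = m) (i : S) :
    μ (E ∩ {ω | ω (K + 1) = i}) = μ E * p m i := by
  have hV := Set.image_subset_range (stopPath K) E
  have hdisj : (stopPath K '' E).PairwiseDisjoint (fun v => cyl K v ∩ {ω | ω (K + 1) = i}) :=
    (pairwiseDisjoint_cyl hV).mono fun _ => Set.inter_subset_left
  conv_lhs => rw [hE.eq_biUnion_cyl, Set.iUnion₂_inter]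
  rw [measure_biUnion ((countable_range_stopPath K).mono hV) hdisj
      fun v _ => (measurableSet_cyl K v).inter (by measurability),
    hE.measure_eq_tsum μ, ← ENNReal.tsum_mul_right]
  refine tsum_congr fun ⟨_, u, hu, rfl⟩ => ?_
  simp only [measure_cyl_inter hμ, stopPath, min_self, hm u hu]

lemma measure_avoids_inter (hμ : IsMarkovChain p s μ) (j : S) (K : ℕ) (i : S) :
    μ (avoids j K ∩ {ω | ω K = i}) = killedDist p s j K i := by
  induction K generalizing i with
  | zero =>
    have : avoids j 0 ∩ {ω | ω 0 = i} = cyl 0 (fun _ => i) := by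
      ext ω
      simp [avoids_zero, cyl]
    rw [this, cyl, hμ.2]
    simp [killedDist]
  | succ K ih =>
    rcases eq_or_ne i j with rfl | hij
    · simp [avoids_succ_inter_self, killedDist]
    rw [avoids_succ_inter hij, measure_eq_tsum_inter_eval μ
      ((dependsUpTo_avoids K).measurableSet.inter (by measurability)) K]
    simp only [killedDist, if_neg hij]
    refine tsum_congr fun m => ?_
    rw [Set.inter_right_comm, hμ.measure_inter_eq_mul
      ((dependsUpTo_avoids K).inter (dependsUpTo_eval le_rfl m)) (fun _ h => h.2), ih]

lemma measure_avoids (hμ : IsMarkovChain p s μ) (j : S) (K : ℕ) :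
    μ (avoids j K) = ∑' i, killedDist p s j K i := by
  simp only [measure_eq_tsum_inter_eval μ (dependsUpTo_avoids K).measurableSet K,
    measure_avoids_inter hμ]

lemma expHit_eq_tsum_killedDist (hμ : IsMarkovChain p s μ) (j : S) :
    expHit μ j = ∑' K, ∑' i, killedDist p s j K i := by
  have hmeas K := (dependsUpTo_avoids (j := j) K).measurableSet
  simp only [expHit, hitTime_eq_tsum_indicator,
    lintegral_tsum fun K => (measurable_one.indicator (hmeas K)).aemeasurable,
    lintegral_indicator_one (hmeas _), hμ.measure_avoids]

end IsMarkovChain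

lemma ENNReal.tsum_eq_of_telescope {a Φ : ℕ → ℝ≥0∞} {C : ℝ≥0∞} (hC : C ≠ ⊤)
    (hstep : ∀ K, Φ K = a K + Φ (K + 1)) (hbound : ∀ K, Φ K ≤ a K * C) :
    ∑' K, a K = Φ 0 := by
  have hpart : ∀ N, ∑ K ∈ range N, a K + Φ N = Φ 0 := by
    intro N
    induction N with
    | zero => simp
    | succ N ih => rw [sum_range_succ, add_assoc, ← hstep, ih]
  have hle : ∑' K, a K ≤ Φ 0 :=
    ENNReal.tsum_le_of_sum_range_le fun N => (hpart N).symm ▸ le_self_add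
  rcases eq_or_ne (∑' K, a K) ⊤ with htop | htop
  · exact le_antisymm hle (htop ▸ le_top)
  have hΦ : Tendsto Φ atTop (𝓝 0) := by
    refine tendsto_of_tendsto_of_tendsto_of_le_of_le tendsto_const_nhds ?_ (fun _ => zero_le)
      hbound
    simpa using ENNReal.Tendsto.mul_const (ENNReal.tendsto_atTop_zero_of_tsum_ne_top htop)
      (.inr hC)
  have hlim := (ENNReal.tendsto_nat_tsum a).add hΦ
  simp only [hpart, add_zero] at hlim
  exact tendsto_nhds_unique hlim tendsto_const_nhds

section Potential

variable {S : Type*} [DecidableEq S] {p : S → S → ℝ≥0∞} {s j : S} {W : Set S}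

lemma mem_of_killedDist_ne_zero (hW : ∀ m ∈ W, ∀ i, p m i ≠ 0 → i ∈ W) (hs : s ∈ W)
    (hsj : s ≠ j) {K : ℕ} {i : S} (hi : killedDist p s j K i ≠ 0) : i ∈ W ∧ i ≠ j := by
  induction K generalizing i with
  | zero =>
    obtain rfl : i = s := by simpa [killedDist] using hi
    exact ⟨hs, hsj⟩
  | succ K ih =>
    by_cases hij : i = j
    · simp [killedDist, hij] at hi
    simp only [killedDist, if_neg hij, ne_eq, ENNReal.tsum_eq_zero, not_forall] at hi
    obtain ⟨m, hm⟩ := hi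
    exact ⟨hW m (ih (left_ne_zero_of_mul hm)).1 i (right_ne_zero_of_mul hm), hij⟩

lemma tsum_killedDist_eq_of_harmonic (hW : ∀ m ∈ W, ∀ i, p m i ≠ 0 → i ∈ W) (hs : s ∈ W)
    (hsj : s ≠ j) {h : S → ℝ≥0∞} {C : ℝ≥0∞} (hC : C ≠ ⊤) (hhC : ∀ i, h i ≤ C) (hj : h j = 0)
    (hharm : ∀ m ∈ W, m ≠ j → h m = 1 + ∑' i, p m i * h i) :
    ∑' K, ∑' i, killedDist p s j K i = h s := by
  set f := killedDist p s j
  have hsucc : ∀ K l, f (K + 1) l * h l = (∑' i, f K i * p i l) * h l := by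
    intro K l
    rcases eq_or_ne l j with rfl | hl
    · simp [hj]
    · simp [f, killedDist, hl]
  have hexpand : ∀ K i, f K i * h i = f K i + ∑' l, f K i * p i l * h l := by
    intro K i
    by_cases hi : f K i = 0
    · simp [hi]
    obtain ⟨hiW, hij⟩ := mem_of_killedDist_ne_zero hW hs hsj hi
    rw [hharm i hiW hij, mul_add, mul_one, ← ENNReal.tsum_mul_left]
    simp only [mul_assoc]
  refine ENNReal.tsum_eq_of_telescope (Φ := fun K => ∑' i, f K i * h i) hC (fun K => ?_)
    (fun K => ?_) |>.trans (by simp [f, killedDist])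
  · simp only [hexpand K, ENNReal.tsum_add, hsucc]
    rw [ENNReal.tsum_comm]
    simp only [ENNReal.tsum_mul_right]
  · rw [← ENNReal.tsum_mul_right]
    exact ENNReal.tsum_le_tsum fun i => by gcongr; exact hhC i

end Potential

section NearestNeighbour

variable {a b : ℤ} {π : ℤ → ℝ≥0∞}

lemma mem_Icc_of_nnTrans_ne_zero (hab : a < b) {m i : ℤ} (h : nnTrans a b π m i ≠ 0) :
    i ∈ Set.Icc a b := by
  unfold nnTrans at h
  split_ifs at h <;> first | exact absurd rfl h | (constructor <;> omega)

lemma tsum_nnTrans_left_mul (f : ℤ → ℝ≥0∞) : ∑' i, nnTrans a b π a i * f i = f (a + 1) := by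
  simp [nnTrans]

lemma tsum_nnTrans_right_mul (hab : a ≠ b) (f : ℤ → ℝ≥0∞) :
    ∑' i, nnTrans a b π b i * f i = f (b - 1) := by
  simp [nnTrans, hab.symm]

lemma tsum_nnTrans_mul_of_mem_Ioo {m : ℤ} (hm : m ∈ Set.Ioo a b) (f : ℤ → ℝ≥0∞) :
    ∑' i, nnTrans a b π m i * f i = π m * f (m + 1) + (1 - π m) * f (m - 1) := by
  have hvanish : ∀ i ∉ ({m + 1, m - 1} : Finset ℤ), nnTrans a b π m i * f i = 0 := by
    intro i hi
    simp only [Finset.mem_insert, Finset.mem_singleton, not_or] at hi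
    simp [nnTrans, hm.1.ne', hm.2.ne, hm.1, hm.2, hi.1, hi.2]
  rw [tsum_eq_sum hvanish, Finset.sum_pair (by omega)]
  simp [nnTrans, hm.1.ne', hm.2.ne, hm.1, hm.2, show m - 1 ≠ m + 1 by omega]

end NearestNeighbour

lemma ENNReal.eq_one_add_inv_two_mul {x y : ℝ≥0∞} (h : 2 * x = 2 + y) : x = 1 + 2⁻¹ * y := by
  have h2 : (2 : ℝ≥0∞)⁻¹ * 2 = 1 := ENNReal.inv_mul_cancel two_ne_zero ENNReal.ofNat_ne_top
  calc x = 2⁻¹ * (2 * x) := by rw [← mul_assoc, h2, one_mul]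
    _ = 1 + 2⁻¹ * y := by rw [h, mul_add, h2]

section StandardWalk

variable {n : ℕ} {a b : ℤ}

/-- `E_i[T_b]` for the standard walk on `{1, …, n}`, where `b` is the end opposite to `a`. -/
def stdWalkPotential (n : ℕ) (a i : ℤ) : ℕ := (((n : ℤ) - 1) ^ 2 - (i - a) ^ 2).toNat

lemma natCast_stdWalkPotential (hab : a = 1 ∧ b = n ∨ a = n ∧ b = 1) {i : ℤ}
    (hi : i ∈ Set.Icc 1 (n : ℤ)) :
    (stdWalkPotential n a i : ℤ) = ((n : ℤ) - 1) ^ 2 - (i - a) ^ 2 :=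
  Int.toNat_of_nonneg <| by
    obtain ⟨hi1, hin⟩ := hi
    rcases hab with ⟨rfl, -⟩ | ⟨rfl, -⟩ <;> nlinarith

lemma stdWalkPotential_le_self (i : ℤ) : stdWalkPotential n a i ≤ stdWalkPotential n a a :=
  Int.toNat_le_toNat (by simp only [sub_self]; nlinarith [sq_nonneg (i - a)])

lemma stdWalkPotential_eq_zero (hab : a = 1 ∧ b = n ∨ a = n ∧ b = 1) :
    stdWalkPotential n a b = 0 := by
  rw [stdWalkPotential, Int.toNat_eq_zero, sub_nonpos]
  rcases hab with ⟨rfl, rfl⟩ | ⟨rfl, rfl⟩ <;> exact le_of_eq (by ring)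

lemma stdWalkPotential_harmonic (hn : 1 < n) (hab : a = 1 ∧ b = n ∨ a = n ∧ b = 1) {m : ℤ}
    (hm : m ∈ Set.Icc 1 (n : ℤ)) (hmb : m ≠ b) :
    (stdWalkPotential n a m : ℝ≥0∞) =
      1 + ∑' i, nnTrans 1 n (fun _ => 1 / 2) m i * stdWalkPotential n a i := by
  have hcast {i : ℤ} (hi1 : 1 ≤ i) (hin : i ≤ n) := natCast_stdWalkPotential hab ⟨hi1, hin⟩
  obtain ⟨hm1, hmn⟩ := hm
  rcases eq_or_lt_of_le hm1 with rfl | hm1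
  · obtain rfl : a = 1 := by omega
    rw [tsum_nnTrans_left_mul]
    have : stdWalkPotential n 1 1 = 1 + stdWalkPotential n 1 (1 + 1) := by
      zify
      rw [hcast le_rfl (by omega), hcast (by omega) (by omega)]
      nlinarith
    exact_mod_cast this
  rcases eq_or_lt_of_le hmn with rfl | hmn
  · obtain rfl : a = n := by omega
    rw [tsum_nnTrans_right_mul (by omega)]
    have : stdWalkPotential n n n = 1 + stdWalkPotential n n (n - 1) := by
      zify
      rw [hcast (by omega) le_rfl, hcast (by omega) (by omega)]
      nlinarith
    exact_mod_cast this
  rw [tsum_nnTrans_mul_of_mem_Ioo ⟨hm1, hmn⟩, one_div, ENNReal.one_sub_inv_two, ← mul_add]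
  refine ENNReal.eq_one_add_inv_two_mul ?_
  have : 2 * stdWalkPotential n a m =
      2 + (stdWalkPotential n a (m + 1) + stdWalkPotential n a (m - 1)) := by
    zify
    rw [hcast (by omega) (by omega), hcast (by omega) (by omega), hcast (by omega) (by omega)]
    ring
  exact_mod_cast this

lemma expHit_stdWalk (hn : 1 < n) (hab : a = 1 ∧ b = n ∨ a = n ∧ b = 1) {μ : Measure (ℕ → ℤ)}
    (hμ : IsMarkovChain (nnTrans 1 n (fun _ => 1 / 2)) a μ) :
    expHit μ b = ((n : ℝ≥0∞) - 1) ^ 2 := by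
  have hW : ∀ m ∈ Set.Icc 1 (n : ℤ), ∀ i, nnTrans 1 n (fun _ => 1 / 2) m i ≠ 0 →
      i ∈ Set.Icc 1 (n : ℤ) :=
    fun _ _ _ => mem_Icc_of_nnTrans_ne_zero (by exact_mod_cast hn)
  have ha : a ∈ Set.Icc 1 (n : ℤ) := by
    rcases hab with ⟨rfl, -⟩ | ⟨rfl, -⟩ <;> constructor <;> omega
  have hvalue : stdWalkPotential n a a = (n - 1) ^ 2 := by
    rw [stdWalkPotential, sub_self, zero_pow two_ne_zero, sub_zero,
      show (n : ℤ) - 1 = ((n - 1 : ℕ) : ℤ) by omega, ← Nat.cast_pow, Int.toNat_natCast]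
  rw [hμ.expHit_eq_tsum_killedDist, tsum_killedDist_eq_of_harmonic hW ha (by omega)
      (ENNReal.natCast_ne_top _) (fun i => Nat.cast_le.2 (stdWalkPotential_le_self i))
      (by simp [stdWalkPotential_eq_zero hab]) fun _ => stdWalkPotential_harmonic hn hab,
    hvalue, Nat.cast_pow, ENNReal.natCast_sub, Nat.cast_one]

end StandardWalk

/-- For the standard random walk on `{1, …, n}` with reflecting
barriers (`π i = 1/2` at every interior state), `E[T_{1,n}] + E[T_{n,1}] = 2 (n-1)²`;
hence the lower bound `2 (n-1)²` over all nearest-neighbour chains with reflecting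
barriers is attained by the standard random walk. -/
theorem statement3 (n : ℕ) (hn : 1 < n)
    (μ₁ μₙ : MeasureTheory.Measure (ℕ → ℤ))
    (h₁ : IsMarkovChain (nnTrans 1 n (fun _ => 1 / 2)) 1 μ₁)
    (hₙ : IsMarkovChain (nnTrans 1 n (fun _ => 1 / 2)) n μₙ) :
    expHit μ₁ (n : ℤ) + expHit μₙ 1 = 2 * ((n : ℝ≥0∞) - 1) ^ 2 := by
  rw [expHit_stdWalk hn (Or.inl ⟨rfl, rfl⟩) h₁, expHit_stdWalk hn (Or.inr ⟨rfl, rfl⟩) hₙ, two_mul]
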